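/- Let X be a finite index type and let Φ₀, Φ₁ : Matrix X X ℂ →ₗ[ℂ] Matrix (Fin 2) (Fin 2) ℂ be quantum channels with one-qubit output. Then for every finite index type Z, every density operator ρ on X × Z, and every binary separable measurement {P₀, P₁} on (Fin 2) × Z (i.e., P₀ and P₁ are separable positive semidefinite operators with P₀ + P₁ = 1), it holds that ⟨P₀ − P₁, ((Φ₀ − Φ₁) ⊗ id_Z)(ρ)⟩ ≤ c, where c is any real number such that ‖Φ₀(σ) − Φ₁(σ)‖₁ ≤ c for every density operator σ on X. (Consequently ‖Φ₀ − Φ₁‖_SEP = ‖Φ₀ − Φ₁‖_NE when dim Y = 2.) -/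

import Mathlib

open Matrix Kronecker BigOperators ComplexOrder

noncomputable def traceNorm {n : Type*} [Fintype n] [DecidableEq n] (A : Matrix n n ℂ) : ℝ :=
  (((Matrix.posSemidef_conjTranspose_mul_self A).isHermitian.eigenvectorUnitary.1 *
      Matrix.diagonal ((fun x : ℝ => (x : ℂ)) ∘ (√·) ∘ (Matrix.posSemidef_conjTranspose_mul_self A).isHermitian.eigenvalues) *
      (star (Matrix.posSemidef_conjTranspose_mul_self A).isHermitian.eigenvectorUnitary :
        Matrix n n ℂ)).trace).re

def IsDensity {n : Type*} [Fintype n] (ρ : Matrix n n ℂ) : Prop :=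
  ρ.PosSemidef ∧ ρ.trace = 1

def tensorId {X Y Z : Type*} (Φ : Matrix X X ℂ → Matrix Y Y ℂ)
    (ρ : Matrix (X × Z) (X × Z) ℂ) : Matrix (Y × Z) (Y × Z) ℂ :=
  Matrix.of fun p q => Φ (Matrix.of fun x x' => ρ (x, p.2) (x', q.2)) p.1 q.1

noncomputable def ChoiMatrix {X Y : Type*} [Fintype X] [DecidableEq X] [Fintype Y]
    (Φ : Matrix X X ℂ → Matrix Y Y ℂ) : Matrix (Y × X) (Y × X) ℂ :=
  ∑ j : X, ∑ k : X, (Φ (Matrix.single j k 1)) ⊗ₖ (Matrix.single j k 1)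

def IsChannel {X Y : Type*} [Fintype X] [DecidableEq X] [Fintype Y]
    (Φ : Matrix X X ℂ →ₗ[ℂ] Matrix Y Y ℂ) : Prop :=
  (∀ M, (Φ M).trace = M.trace) ∧ (ChoiMatrix (⇑Φ)).PosSemidef

def SeparableOp {Y Z : Type*} [Fintype Y] [Fintype Z]
    (P : Matrix (Y × Z) (Y × Z) ℂ) : Prop :=
  ∃ (N : ℕ) (Q : Fin N → Matrix Y Y ℂ) (R : Fin N → Matrix Z Z ℂ),
    (∀ i, (Q i).PosSemidef) ∧ (∀ i, (R i).PosSemidef) ∧ P = ∑ i, Q i ⊗ₖ R i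

def partialTranspose {Y Z : Type*} (M : Matrix (Y × Z) (Y × Z) ℂ) :
    Matrix (Y × Z) (Y × Z) ℂ :=
  Matrix.of fun p q => M (p.1, q.2) (q.1, p.2)

def IsPPT {Y Z : Type*} [Fintype Y] [Fintype Z] (M : Matrix (Y × Z) (Y × Z) ℂ) : Prop :=
  M.PosSemidef ∧ (partialTranspose M).PosSemidef

/-
Write `Ψ = Φ₀ - Φ₁` and `P = ∑ Qᵢ ⊗ Rᵢ` with `Qᵢ, Rᵢ ≥ 0`. Pairing `Qᵢ ⊗ Rᵢ` with
`(Ψ ⊗ id)(ρ)` gives `⟨Qᵢ, Ψ σᵢ⟩` where `σᵢ = Tr_Z[(1 ⊗ Rᵢ) ρ] ≥ 0`. On a qubit `Ψ σ` is Hermitian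
and traceless, so `(Ψ σ)²` is the scalar `-det (Ψ σ)` and `‖Ψ σ‖₁ = 2 √(-det (Ψ σ))`; a
Cauchy–Schwarz estimate then gives `|⟨Q, Ψ σ⟩| ≤ Tr Q / 2 · ‖Ψ σ‖₁ ≤ c / 2 · Tr Q · Tr σ` for
`Q ≥ 0`. Summing over `i`, each separable `Pₐ` contributes at most `c / 2 · ⟨Pₐ, 1 ⊗ Tr_X ρ⟩`,
and since `P₀ + P₁ = 1` these weights add up to `c / 2 · Tr (1 ⊗ Tr_X ρ) = c`.
-/

section PartialTrace

variable {X Z : Type*} [Fintype Z]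

def partialTraceRight (M : Matrix (X × Z) (X × Z) ℂ) : Matrix X X ℂ :=
  ∑ z, M.submatrix (·, z) (·, z)

lemma partialTraceRight_apply (M : Matrix (X × Z) (X × Z) ℂ) (x x' : X) :
    partialTraceRight M x x' = ∑ z, M (x, z) (x', z) := by
  simp [partialTraceRight, Matrix.sum_apply]

lemma Matrix.PosSemidef.partialTraceRight {M : Matrix (X × Z) (X × Z) ℂ} (hM : M.PosSemidef) :
    (partialTraceRight M).PosSemidef :=
  posSemidef_sum _ fun _ _ => hM.submatrix _

variable [Fintype X] [DecidableEq X]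

lemma one_kronecker_mul_apply (A : Matrix Z Z ℂ) (M : Matrix (X × Z) (X × Z) ℂ) (x : X) (z : Z)
    (q : X × Z) : ((1 : Matrix X X ℂ) ⊗ₖ A * M) (x, z) q = ∑ z', A z z' * M (x, z') q := by
  rw [mul_apply, Fintype.sum_prod_type, Finset.sum_comm]
  simp [one_apply]

lemma mul_one_kronecker_apply (A : Matrix Z Z ℂ) (M : Matrix (X × Z) (X × Z) ℂ) (p : X × Z)
    (x : X) (z : Z) : (M * ((1 : Matrix X X ℂ) ⊗ₖ A)) p (x, z) = ∑ z', M p (x, z') * A z' z := by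
  rw [mul_apply, Fintype.sum_prod_type, Finset.sum_comm]
  simp [one_apply]

lemma partialTraceRight_one_kronecker_mul (A : Matrix Z Z ℂ) (M : Matrix (X × Z) (X × Z) ℂ) :
    partialTraceRight ((1 ⊗ₖ A) * M) = partialTraceRight (M * (1 ⊗ₖ A)) := by
  ext x x'
  simp only [partialTraceRight_apply, one_kronecker_mul_apply, mul_one_kronecker_apply]
  rw [Finset.sum_comm]
  simp only [mul_comm]

open scoped MatrixOrder in
lemma posSemidef_partialTraceRight_one_kronecker_mul {R : Matrix Z Z ℂ}
    {ρ : Matrix (X × Z) (X × Z) ℂ} (hR : R.PosSemidef) (hρ : ρ.PosSemidef) :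
    (partialTraceRight ((1 ⊗ₖ R) * ρ)).PosSemidef := by
  classical
  obtain ⟨B, rfl⟩ := CStarAlgebra.nonneg_iff_eq_star_mul_self.mp hR.nonneg
  have hstar : ((1 : Matrix X X ℂ) ⊗ₖ B)ᴴ = 1 ⊗ₖ Bᴴ := by
    rw [conjTranspose_kronecker, conjTranspose_one]
  rw [star_eq_conjTranspose, ← one_mul (1 : Matrix X X ℂ), mul_kronecker_mul, Matrix.mul_assoc,
    partialTraceRight_one_kronecker_mul, ← hstar]
  exact (hρ.mul_mul_conjTranspose_same _).partialTraceRight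

lemma partialTraceRight_one_kronecker_mul_eq_sum (B : Matrix Z Z ℂ)
    (ρ : Matrix (X × Z) (X × Z) ℂ) :
    partialTraceRight ((1 ⊗ₖ B) * ρ) = ∑ z, ∑ z', B z z' • ρ.submatrix (·, z') (·, z) := by
  ext x x'
  simp [partialTraceRight_apply, one_kronecker_mul_apply, Matrix.sum_apply]

lemma trace_kronecker_mul_tensorId {Y : Type*} [Fintype Y]
    (Ψ : Matrix X X ℂ →ₗ[ℂ] Matrix Y Y ℂ) (A : Matrix Y Y ℂ) (B : Matrix Z Z ℂ)
    (ρ : Matrix (X × Z) (X × Z) ℂ) :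
    ((A ⊗ₖ B) * tensorId Ψ ρ).trace = (A * Ψ (partialTraceRight ((1 ⊗ₖ B) * ρ))).trace := by
  rw [partialTraceRight_one_kronecker_mul_eq_sum]
  simp only [map_sum, _root_.map_smul, Matrix.mul_sum, Matrix.mul_smul, trace_sum, trace_smul,
    smul_eq_mul]
  simp only [trace, diag_apply, mul_apply, Fintype.sum_prod_type, kroneckerMap_apply,
    tensorId, of_apply, Finset.mul_sum]
  rw [Finset.sum_comm]
  refine Finset.sum_congr rfl fun _ _ =>
    (Finset.sum_congr rfl fun _ _ => Finset.sum_comm).trans (Finset.sum_comm.trans ?_)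
  refine Finset.sum_congr rfl fun _ _ => Finset.sum_congr rfl fun _ _ =>
    Finset.sum_congr rfl fun _ _ => ?_
  rw [submatrix]
  ring

end PartialTrace

lemma Matrix.PosSemidef.ofReal_re_trace {n : Type*} [Fintype n] {A : Matrix n n ℂ}
    (hA : A.PosSemidef) : (A.trace.re : ℂ) = A.trace :=
  Complex.ext rfl (by simp [← (Complex.nonneg_iff.mp hA.trace_nonneg).2])

section Qubit

lemma mul_self_eq_neg_det_smul_one_of_trace_eq_zero {R : Type*} [CommRing R]
    {H : Matrix (Fin 2) (Fin 2) R} (h : H.trace = 0) : H * H = -H.det • 1 := by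
  rw [trace_fin_two] at h
  ext i j
  fin_cases i <;> fin_cases j <;>
    simp only [Fin.zero_eta, Fin.mk_one, Fin.isValue, mul_apply, Fin.sum_univ_two, det_fin_two,
      neg_sub, Matrix.smul_apply, one_apply_eq, one_apply_ne zero_ne_one, one_apply_ne one_ne_zero,
      smul_eq_mul, mul_one, mul_zero]
  · linear_combination H 0 0 * h
  · linear_combination H 0 1 * h
  · linear_combination H 1 0 * h
  · linear_combination H 1 1 * h

lemma traceNorm_eq_of_conjTranspose_mul_self_eq_smul_one {n : Type*} [Fintype n] [DecidableEq n]
    (A : Matrix n n ℂ) (s : ℝ) (h : Aᴴ * A = (s : ℂ) • 1) :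
    traceNorm A = Fintype.card n * √s := by
  set hA := (posSemidef_conjTranspose_mul_self A).isHermitian
  have hdiag : ((s : ℂ) • 1 : Matrix n n ℂ) = diagonal (RCLike.ofReal ∘ hA.eigenvalues) := by
    simpa [h] using hA.conjStarAlgAut_star_eigenvectorUnitary
  have hev : ∀ i, hA.eigenvalues i = s := fun i => by
    simpa using (congrFun (congrFun hdiag i) i).symm
  rw [traceNorm, Matrix.trace_mul_cycle, Unitary.coe_star_mul_self, Matrix.one_mul,
    Matrix.trace_diagonal]
  simp [hev]

lemma traceNorm_fin_two_of_trace_eq_zero {H : Matrix (Fin 2) (Fin 2) ℂ} (hH : H.IsHermitian)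
    (h0 : H.trace = 0) : traceNorm H = 2 * √((H 0 0).re ^ 2 + ‖H 0 1‖ ^ 2) := by
  have hdet : -H.det = (((H 0 0).re ^ 2 + ‖H 0 1‖ ^ 2 : ℝ) : ℂ) := by
    have h00 : ((H 0 0).re : ℂ) = H 0 0 := hH.coe_re_apply_self 0
    have h10 : H 1 0 = star (H 0 1) := (hH.apply 1 0).symm
    rw [trace_fin_two] at h0
    rw [det_fin_two, h10, Complex.star_def, ← Complex.normSq_eq_norm_sq]
    push_cast
    rw [Complex.mul_conj, h00]
    linear_combination -H 0 0 * h0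
  rw [traceNorm_eq_of_conjTranspose_mul_self_eq_smul_one H _ (by
      rw [hH.eq, mul_self_eq_neg_det_smul_one_of_trace_eq_zero h0, hdet]),
    Fintype.card_fin, Nat.cast_ofNat]

lemma traceNorm_smul_of_trace_eq_zero {H : Matrix (Fin 2) (Fin 2) ℂ} (hH : H.IsHermitian)
    (h0 : H.trace = 0) {t : ℝ} (ht : 0 ≤ t) : traceNorm ((t : ℂ) • H) = t * traceNorm H := by
  have htH : ((t : ℂ) • H).IsHermitian := by
    rw [IsHermitian, conjTranspose_smul, hH.eq, Complex.star_def, Complex.conj_ofReal]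
  rw [traceNorm_fin_two_of_trace_eq_zero htH (by rw [trace_smul, h0, smul_zero]),
    traceNorm_fin_two_of_trace_eq_zero hH h0]
  simp only [Matrix.smul_apply, smul_eq_mul, Complex.re_ofReal_mul, norm_mul, Complex.norm_real,
    Real.norm_of_nonneg ht]
  rw [show (t * (H 0 0).re) ^ 2 + (t * ‖H 0 1‖) ^ 2 = t ^ 2 * ((H 0 0).re ^ 2 + ‖H 0 1‖ ^ 2) by
    ring, Real.sqrt_mul (sq_nonneg t), Real.sqrt_sq ht]
  ring

-- Cauchy–Schwarz for `(p - r, 2m) · (a, n)`, then `(p - r)² + 4m² ≤ (p + r)²`.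
lemma mul_sub_add_two_mul_le {a n m p r : ℝ} (hp : 0 ≤ p) (hr : 0 ≤ r) (hm : m ^ 2 ≤ p * r) :
    a * (p - r) + 2 * (m * n) ≤ (p + r) * √(a ^ 2 + n ^ 2) := by
  have hs : 0 ≤ a ^ 2 + n ^ 2 := by positivity
  refine le_of_sq_le_sq ?_ (by positivity)
  rw [mul_pow, Real.sq_sqrt hs]
  nlinarith [sq_nonneg (n * (p - r) - 2 * m * a), mul_le_mul_of_nonneg_left hm hs]

lemma re_trace_mul_le_of_trace_eq_zero {Q H : Matrix (Fin 2) (Fin 2) ℂ} (hQ : Q.PosSemidef)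
    (hH : H.IsHermitian) (h0 : H.trace = 0) :
    (Q * H).trace.re ≤ Q.trace.re / 2 * traceNorm H := by
  have hQ00 := Complex.nonneg_iff.mp (hQ.diag_nonneg (i := 0))
  have hQ11 := Complex.nonneg_iff.mp (hQ.diag_nonneg (i := 1))
  have hdet := (Complex.nonneg_iff.mp hQ.det_nonneg).1
  have hQ10 : Q 1 0 = star (Q 0 1) := (hQ.isHermitian.apply 1 0).symm
  have hH10 : H 1 0 = star (H 0 1) := (hH.apply 1 0).symm
  have hH00 : (H 0 0).im = 0 := by simpa using (congrArg Complex.im (hH.coe_re_apply_self 0)).symm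
  have hH11 : H 1 1 = -H 0 0 := by rw [trace_fin_two] at h0; linear_combination h0
  rw [det_fin_two, hQ10, Complex.sub_re, Complex.mul_re, hQ00.2.symm, Complex.star_def,
    Complex.mul_conj, Complex.ofReal_re] at hdet
  have hexp : (Q * H).trace.re
      = (H 0 0).re * ((Q 0 0).re - (Q 1 1).re) + 2 * (Q 0 1 * star (H 0 1)).re := by
    simp only [trace_fin_two, mul_apply, Fin.sum_univ_two, hH10, RCLike.star_def, hQ10, hH11,
      mul_neg, Complex.add_re, Complex.mul_re, ← hQ00.2, hH00, mul_zero, sub_zero, Complex.conj_re,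
      Complex.conj_im, sub_neg_eq_add, neg_mul, Complex.neg_re, ← hQ11.2]
    ring
  have hcross : (Q 0 1 * star (H 0 1)).re ≤ ‖Q 0 1‖ * ‖H 0 1‖ := by
    simpa using Complex.re_le_norm (Q 0 1 * star (H 0 1))
  rw [hexp, traceNorm_fin_two_of_trace_eq_zero hH h0, trace_fin_two, Complex.add_re]
  have := mul_sub_add_two_mul_le (a := (H 0 0).re) (n := ‖H 0 1‖) hQ00.1 hQ11.1
    (m := ‖Q 0 1‖) (by rw [← Complex.normSq_eq_norm_sq]; linarith)
  linarith

lemma trace_smul_one_sub_eq_mul_transpose_mul (M : Matrix (Fin 2) (Fin 2) ℂ) :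
    M.trace • 1 - M = !![0, 1; -1, 0] * Mᵀ * (!![0, 1; -1, 0])ᴴ := by
  ext i j
  fin_cases i <;> fin_cases j <;>
    simp [trace_fin_two, mul_apply, vecMul, dotProduct, Fin.sum_univ_two]

lemma Matrix.PosSemidef.trace_smul_one_sub {Q : Matrix (Fin 2) (Fin 2) ℂ} (hQ : Q.PosSemidef) :
    (Q.trace • 1 - Q).PosSemidef := by
  rw [trace_smul_one_sub_eq_mul_transpose_mul]
  exact hQ.transpose.mul_mul_conjTranspose_same _

lemma abs_re_trace_mul_le_of_trace_eq_zero {Q H : Matrix (Fin 2) (Fin 2) ℂ} (hQ : Q.PosSemidef)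
    (hH : H.IsHermitian) (h0 : H.trace = 0) :
    |(Q * H).trace.re| ≤ Q.trace.re / 2 * traceNorm H := by
  -- the lower bound is the upper bound for the adjugate `Q.trace • 1 - Q`
  have hadj := re_trace_mul_le_of_trace_eq_zero hQ.trace_smul_one_sub hH h0
  rw [sub_mul, smul_mul, Matrix.one_mul, trace_sub, trace_smul, h0, smul_zero, zero_sub,
    trace_sub, trace_smul, trace_one, Fintype.card_fin] at hadj
  simp only [Complex.neg_re, smul_eq_mul, Complex.sub_re, Complex.mul_re,
    Complex.natCast_re, Complex.natCast_im] at hadj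
  refine abs_le.mpr ⟨by linarith, re_trace_mul_le_of_trace_eq_zero hQ hH h0⟩

end Qubit

section Separable

variable {X Y Z : Type*} [Fintype X] [Fintype Y] [DecidableEq Y] [Fintype Z]

variable (X Y) in
def traceSmulOne : Matrix X X ℂ →ₗ[ℂ] Matrix Y Y ℂ :=
  (traceLinearMap X ℂ ℂ).smulRight 1

lemma re_trace_conjTranspose_mul_traceSmulOne {Q : Matrix Y Y ℂ} {σ : Matrix X X ℂ}
    (hQ : Q.PosSemidef) (hσ : σ.PosSemidef) :
    (Qᴴ * traceSmulOne X Y σ).trace.re = Q.trace.re * σ.trace.re := by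
  rw [traceSmulOne, LinearMap.smulRight_apply, traceLinearMap_apply, Matrix.mul_smul,
    Matrix.mul_one, trace_smul, smul_eq_mul, hQ.isHermitian.eq, mul_comm]
  conv_lhs => rw [← hQ.ofReal_re_trace, ← hσ.ofReal_re_trace]
  exact Complex.re_ofReal_mul _ _

lemma trace_tensorId_traceSmulOne (ρ : Matrix (X × Z) (X × Z) ℂ) :
    (tensorId (traceSmulOne X Y) ρ).trace = Fintype.card Y * ρ.trace := by
  simp only [trace, diag_apply, tensorId, traceSmulOne, of_apply, LinearMap.smulRight_apply,
    traceLinearMap_apply, Matrix.smul_apply, one_apply_eq, smul_eq_mul, mul_one,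
    Fintype.sum_prod_type, Finset.sum_const, Finset.card_univ, nsmul_eq_mul]
  rw [Finset.sum_comm]

lemma abs_re_trace_mul_tensorId_le_of_separableOp [DecidableEq X]
    (Ψ : Matrix X X ℂ →ₗ[ℂ] Matrix Y Y ℂ) {k : ℝ}
    (hΨ : ∀ (Q : Matrix Y Y ℂ) (σ : Matrix X X ℂ), Q.PosSemidef → σ.PosSemidef →
      |(Qᴴ * Ψ σ).trace.re| ≤ k * (Q.trace.re * σ.trace.re))
    {ρ : Matrix (X × Z) (X × Z) ℂ} (hρ : ρ.PosSemidef) {P : Matrix (Y × Z) (Y × Z) ℂ}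
    (hP : SeparableOp P) :
    |(Pᴴ * tensorId Ψ ρ).trace.re| ≤ k * (Pᴴ * tensorId (traceSmulOne X Y) ρ).trace.re := by
  obtain ⟨N, Q, R, hQ, hR, rfl⟩ := hP
  simp only [conjTranspose_sum, Finset.sum_mul, trace_sum, Complex.re_sum, Finset.mul_sum,
    conjTranspose_kronecker, trace_kronecker_mul_tensorId]
  refine (Finset.abs_sum_le_sum_abs _ _).trans (Finset.sum_le_sum fun i _ => ?_)
  have hσ := posSemidef_partialTraceRight_one_kronecker_mul (hR i) hρ
  rw [(hR i).isHermitian.eq, re_trace_conjTranspose_mul_traceSmulOne (hQ i) hσ]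
  exact hΨ _ _ (hQ i) hσ

end Separable

section Channel

variable {X Y : Type*} [Fintype X] [DecidableEq X] [Fintype Y]

lemma choiMatrix_apply (Φ : Matrix X X ℂ → Matrix Y Y ℂ) (y y' : Y) (j k : X) :
    ChoiMatrix Φ (y, j) (y', k) = Φ (single j k 1) y y' := by
  simp [ChoiMatrix, Matrix.sum_apply, single_apply, ite_and]

lemma map_conjTranspose_of_isHermitian_choiMatrix (Φ : Matrix X X ℂ →ₗ[ℂ] Matrix Y Y ℂ)
    (hΦ : (ChoiMatrix ⇑Φ).IsHermitian) (σ : Matrix X X ℂ) : (Φ σ)ᴴ = Φ σᴴ := by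
  have hsingle : ∀ j k (c : ℂ), (Φ (single j k c))ᴴ = Φ (single k j (star c)) := by
    intro j k c
    have hunit : (Φ (single j k 1))ᴴ = Φ (single k j 1) := by
      ext y y'
      simpa [choiMatrix_apply] using congrFun (congrFun hΦ.eq (y, k)) (y', j)
    have hsmul : ∀ (i i' : X) (a : ℂ), (single i i' a : Matrix X X ℂ) = a • single i i' 1 := by
      simp [smul_single]
    rw [hsmul j k, hsmul k j, _root_.map_smul, _root_.map_smul, conjTranspose_smul, hunit]
  conv_lhs => rw [matrix_eq_sum_single σ]
  conv_rhs => rw [matrix_eq_sum_single σᴴ]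
  simp only [map_sum, conjTranspose_sum, hsingle, conjTranspose_apply]
  exact Finset.sum_comm

lemma IsChannel.isHermitian_map {Φ : Matrix X X ℂ →ₗ[ℂ] Matrix Y Y ℂ} (hΦ : IsChannel Φ)
    {σ : Matrix X X ℂ} (hσ : σ.IsHermitian) : (Φ σ).IsHermitian := by
  rw [IsHermitian, map_conjTranspose_of_isHermitian_choiMatrix Φ hΦ.2.isHermitian, hσ.eq]

end Channel

section QubitChannels

variable {X : Type*} [Fintype X] [DecidableEq X]
  {Φ₀ Φ₁ : Matrix X X ℂ →ₗ[ℂ] Matrix (Fin 2) (Fin 2) ℂ}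

lemma traceNorm_sub_le_of_posSemidef (hΦ₀ : IsChannel Φ₀) (hΦ₁ : IsChannel Φ₁) {c : ℝ}
    (hc : ∀ σ : Matrix X X ℂ, IsDensity σ → traceNorm (Φ₀ σ - Φ₁ σ) ≤ c)
    {σ : Matrix X X ℂ} (hσ : σ.PosSemidef) : traceNorm (Φ₀ σ - Φ₁ σ) ≤ c * σ.trace.re := by
  set t := σ.trace.re
  rcases (Complex.nonneg_iff.mp hσ.trace_nonneg).1.eq_or_lt with ht | ht
  · have hσ0 : σ = 0 :=
      hσ.trace_eq_zero_iff.mp (by rw [← hσ.ofReal_re_trace, ← ht, Complex.ofReal_zero])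
    simp [hσ0, t, traceNorm_fin_two_of_trace_eq_zero isHermitian_zero (trace_zero _ _)]
  set σ₁ := ((t⁻¹ : ℝ) : ℂ) • σ
  have hσ₁ : IsDensity σ₁ := by
    refine ⟨hσ.smul (Complex.zero_le_real.mpr (inv_nonneg.mpr ht.le)), ?_⟩
    rw [trace_smul, ← hσ.ofReal_re_trace, smul_eq_mul, ← Complex.ofReal_mul,
      inv_mul_cancel₀ ht.ne', Complex.ofReal_one]
  have hscale : Φ₀ σ - Φ₁ σ = (t : ℂ) • (Φ₀ σ₁ - Φ₁ σ₁) := by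
    rw [_root_.map_smul, _root_.map_smul, ← smul_sub, smul_smul, ← Complex.ofReal_mul,
      mul_inv_cancel₀ ht.ne', Complex.ofReal_one, one_smul]
  have hH := (hΦ₀.isHermitian_map hσ₁.1.isHermitian).sub (hΦ₁.isHermitian_map hσ₁.1.isHermitian)
  have h0 : (Φ₀ σ₁ - Φ₁ σ₁).trace = 0 := by rw [trace_sub, hΦ₀.1, hΦ₁.1, sub_self]
  rw [hscale, traceNorm_smul_of_trace_eq_zero hH h0 ht.le, mul_comm c]
  exact mul_le_mul_of_nonneg_left (hc σ₁ hσ₁) ht.le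

lemma abs_re_trace_mul_sub_le (hΦ₀ : IsChannel Φ₀) (hΦ₁ : IsChannel Φ₁) {c : ℝ}
    (hc : ∀ σ : Matrix X X ℂ, IsDensity σ → traceNorm (Φ₀ σ - Φ₁ σ) ≤ c)
    {Q : Matrix (Fin 2) (Fin 2) ℂ} {σ : Matrix X X ℂ} (hQ : Q.PosSemidef) (hσ : σ.PosSemidef) :
    |(Qᴴ * (Φ₀ σ - Φ₁ σ)).trace.re| ≤ c / 2 * (Q.trace.re * σ.trace.re) := by
  have hH := (hΦ₀.isHermitian_map hσ.isHermitian).sub (hΦ₁.isHermitian_map hσ.isHermitian)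
  have h0 : (Φ₀ σ - Φ₁ σ).trace = 0 := by rw [trace_sub, hΦ₀.1, hΦ₁.1, sub_self]
  have hQtr : 0 ≤ Q.trace.re := (Complex.nonneg_iff.mp hQ.trace_nonneg).1
  rw [hQ.isHermitian.eq]
  calc |(Q * (Φ₀ σ - Φ₁ σ)).trace.re| ≤ Q.trace.re / 2 * traceNorm (Φ₀ σ - Φ₁ σ) :=
        abs_re_trace_mul_le_of_trace_eq_zero hQ hH h0
    _ ≤ Q.trace.re / 2 * (c * σ.trace.re) := by
        gcongr
        exact traceNorm_sub_le_of_posSemidef hΦ₀ hΦ₁ hc hσ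
    _ = c / 2 * (Q.trace.re * σ.trace.re) := by ring

end QubitChannels

theorem sep_eq_ne_for_qubit_output_general
    {X : Type*} [Fintype X] [DecidableEq X]
    (Φ₀ Φ₁ : Matrix X X ℂ →ₗ[ℂ] Matrix (Fin 2) (Fin 2) ℂ)
    (hΦ₀ : IsChannel Φ₀) (hΦ₁ : IsChannel Φ₁)
    (c : ℝ) (hc : ∀ σ : Matrix X X ℂ, IsDensity σ → traceNorm (Φ₀ σ - Φ₁ σ) ≤ c)
    (Z : Type*) [Fintype Z] [DecidableEq Z]
    (ρ : Matrix (X × Z) (X × Z) ℂ) (hρ : IsDensity ρ)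
    (P₀ P₁ : Matrix (Fin 2 × Z) (Fin 2 × Z) ℂ)
    (hP₀sep : SeparableOp P₀) (hP₁sep : SeparableOp P₁)
    (hmeas : P₀ + P₁ = 1) :
    (((P₀ - P₁)ᴴ * tensorId (fun M => Φ₀ M - Φ₁ M) ρ).trace).re ≤ c := by
  have hterm : ∀ (Q : Matrix (Fin 2) (Fin 2) ℂ) (σ : Matrix X X ℂ), Q.PosSemidef →
      σ.PosSemidef → |(Qᴴ * (Φ₀ - Φ₁) σ).trace.re| ≤ c / 2 * (Q.trace.re * σ.trace.re) :=
    fun _ _ hQ hσ => abs_re_trace_mul_sub_le hΦ₀ hΦ₁ hc hQ hσ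
  have h₀ := abs_re_trace_mul_tensorId_le_of_separableOp _ hterm hρ.1 hP₀sep
  have h₁ := abs_re_trace_mul_tensorId_le_of_separableOp _ hterm hρ.1 hP₁sep
  have hweight : (P₀ᴴ * tensorId (traceSmulOne X (Fin 2)) ρ).trace.re
      + (P₁ᴴ * tensorId (traceSmulOne X (Fin 2)) ρ).trace.re = 2 := by
    rw [← Complex.add_re, ← trace_add, ← Matrix.add_mul, ← conjTranspose_add, hmeas,
      conjTranspose_one, Matrix.one_mul, trace_tensorId_traceSmulOne, hρ.2]
    simp
  have hsplit : ((P₀ - P₁)ᴴ * tensorId (fun M => Φ₀ M - Φ₁ M) ρ).trace.re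
      = (P₀ᴴ * tensorId (Φ₀ - Φ₁) ρ).trace.re - (P₁ᴴ * tensorId (Φ₀ - Φ₁) ρ).trace.re := by
    rw [conjTranspose_sub, Matrix.sub_mul, trace_sub, Complex.sub_re]
    rfl
  rw [hsplit]
  linarith [congrArg (c / 2 * ·) hweight, le_abs_self (P₀ᴴ * tensorId (Φ₀ - Φ₁) ρ).trace.re,
    neg_abs_le (P₁ᴴ * tensorId (Φ₀ - Φ₁) ρ).trace.re]

/-- for channels with one-qubit output, separable measurements do no better
than strategies without entanglement: `‖Φ₀ - Φ₁‖_SEP = ‖Φ₀ - Φ₁‖_NE` when `dim Y = 2`. -/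
theorem sep_eq_ne_for_qubit_output
    {X : Type*} [Fintype X] [DecidableEq X]
    (Φ₀ Φ₁ : Matrix X X ℂ →ₗ[ℂ] Matrix (Fin 2) (Fin 2) ℂ)
    (hΦ₀ : IsChannel Φ₀) (hΦ₁ : IsChannel Φ₁)
    (c : ℝ) (hc : ∀ σ : Matrix X X ℂ, IsDensity σ → traceNorm (Φ₀ σ - Φ₁ σ) ≤ c)
    (Z : Type*) [Fintype Z] [DecidableEq Z]
    (ρ : Matrix (X × Z) (X × Z) ℂ) (hρ : IsDensity ρ)
    (P₀ P₁ : Matrix (Fin 2 × Z) (Fin 2 × Z) ℂ)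
    (hP₀sep : SeparableOp P₀) (hP₁sep : SeparableOp P₁)
    (hP₀ : P₀.PosSemidef) (hP₁ : P₁.PosSemidef)
    (hmeas : P₀ + P₁ = 1) :
    (((P₀ - P₁)ᴴ * tensorId (fun M => Φ₀ M - Φ₁ M) ρ).trace).re ≤ c :=
  sep_eq_ne_for_qubit_output_general Φ₀ Φ₁ hΦ₀ hΦ₁ c hc Z ρ hρ P₀ P₁ hP₀sep hP₁sep hmeas
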